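/- arXiv:1106.3606 — 4 statements merged into one kernel-verified Lean document; each statement's English description precedes it below -/
import Mathlib

section
/- For integers u, d, v, e with 2||d (d even but not divisible by 4), gcd(u,d) = 1, and uv - de = -1, the matrix identity holds: [[1, u/d],[0,1]]·[[4/d, 0],[0, d]] = [[2e-u, e],[2v-d, v]]·[[1,0],[-2,1]]·[[1, v/d],[0,1]]·[[0,-1],[4,0]], and the matrix [[2e-u, e],[2v-d, v]] has determinant 1 and its lower-left entry 2v-d is divisible by 4. -/
open Matrix

/-- Matrix decomposition for the cusp `u/d` with `2‖d` (i.e. `d ≡ 2 (mod 4)`):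
`[[1,u/d],[0,1]]·[[4/d,0],[0,d]]
  = [[2e-u,e],[2v-d,v]]·[[1,0],[-2,1]]·[[1,v/d],[0,1]]·[[0,-1],[4,0]]`,
and `[[2e-u,e],[2v-d,v]]` has determinant `1` and its lower-left entry `2v-d`
is divisible by `4`. -/
theorem matrix_decomposition_two_exactly_dvd (u d v e : ℤ)
    (hd2 : (2 : ℤ) ∣ d) (hd4 : ¬ (4 : ℤ) ∣ d) (hd0 : d ≠ 0)
    (hgcd : IsCoprime u d) (hdet : u * v - d * e = -1) :
    (!![1, (u : ℝ) / d; 0, 1] * !![4 / (d : ℝ), 0; 0, (d : ℝ)] =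
      !![2 * (e : ℝ) - u, (e : ℝ); 2 * (v : ℝ) - d, (v : ℝ)] * !![1, 0; -2, 1] *
        !![1, (v : ℝ) / d; 0, 1] * !![0, -1; 4, 0]) ∧
    Matrix.det !![2 * e - u, e; 2 * v - d, v] = 1 ∧ (4 : ℤ) ∣ (2 * v - d) := by
  have hdR : (d : ℝ) ≠ 0 := Int.cast_ne_zero.mpr hd0
  have hdetR : (u : ℝ) * v - d * e = -1 := by exact_mod_cast hdet
  refine ⟨?_, ?_, ?_⟩
  · ext i j
    fin_cases i <;> fin_cases j <;>
      simp [Matrix.mul_apply, Fin.sum_univ_succ] <;> (try field_simp) <;>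
        (try linarith [hdetR])
  · simp [Matrix.det_fin_two]; linarith [hdet]
  · obtain ⟨m, rfl⟩ := hd2
    have hm : Odd m := by
      rcases Int.even_or_odd m with he | ho
      · exact absurd (by obtain ⟨k, rfl⟩ := he; exact ⟨k, by ring⟩) hd4
      · exact ho
    have hv : Odd v := by
      rcases Int.even_or_odd v with he | ho
      · exfalso; obtain ⟨k, rfl⟩ := he
        have hev : Even (u * (k + k) - 2 * m * e) := ⟨u * k - m * e, by ring⟩
        rw [hdet] at hev
        exact (by decide : ¬ Even (-1 : ℤ)) hev
      · exact ho
    obtain ⟨a, ha⟩ := hm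
    obtain ⟨b, hb⟩ := hv
    exact ⟨b - a, by omega⟩
end

section
/- Let f : ℍ → ℂ be given by a Fourier series f(z) = Σ_{m≥1} b(m)e^{2πimz} with |b(m)| ≤ C·m^A for some A > 0. Then for any rational q and any s ∈ ℂ with Re(s) > A+1, ∫_0^∞ f(iy+q)y^s dy/y = Γ(s)/(2π)^s · Σ_{m≥1} b(m)e^{2πimq}/m^s. -/
open Complex Real

/-!
On the vertical line `z = t * I + x` the `m`-th term of the Fourier series is
`b m * e^{2πimx} * e^{-2πmt}`, so `t ↦ f (t * I + x)` is an exponential series with twisted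
coefficients of the same size as `b m`. Mathlib's `hasSum_mellin` integrates it term by term,
each term contributing `Γ(s) (2πm)^{-s}`; this needs only the summability of
`∑ ‖b m‖ / m ^ Re s`, which the polynomial bound on `b` gives for `Re s > A + 1`.
-/

open Filter Asymptotics in
lemma Real.summable_rpow_mul_exp_neg_nat_mul (A : ℝ) {c : ℝ} (hc : 0 < c) :
    Summable fun n : ℕ ↦ (n : ℝ) ^ A * rexp (-c * n) := by
  have hdecay := ((isLittleO_exp_neg_mul_rpow_atTop hc (-A - 2)).comp_tendsto
    tendsto_natCast_atTop_atTop).isBigO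
  refine summable_of_isBigO_nat (Real.summable_nat_rpow.mpr (by norm_num : (-2 : ℝ) < -1)) ?_
  refine ((isBigO_refl (fun n : ℕ ↦ (n : ℝ) ^ A) atTop).mul hdecay).congr' .rfl ?_
  filter_upwards [eventually_gt_atTop 0] with n hn
  rw [Function.comp_apply, ← Real.rpow_add (by positivity)]
  ring_nf

lemma summable_norm_mul_of_norm_le_rpow {E : Type*} [SeminormedAddCommGroup E] {b : ℕ → E}
    {C A : ℝ} (hb : ∀ m : ℕ, 0 < m → ‖b m‖ ≤ C * (m : ℝ) ^ A) {g : ℕ+ → ℝ}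
    (hg0 : ∀ m, 0 ≤ g m) (hg : Summable fun m : ℕ+ ↦ (m : ℝ) ^ A * g m) :
    Summable fun m : ℕ+ ↦ ‖b m‖ * g m :=
  (hg.mul_left C).of_nonneg_of_le (fun m ↦ mul_nonneg (norm_nonneg _) (hg0 m)) fun m ↦ by
    rw [← mul_assoc]
    exact mul_le_mul_of_nonneg_right (hb m m.pos) (hg0 m)

lemma norm_exp_two_pi_I_mul_natCast_mul_ofReal (m : ℕ) (x : ℝ) :
    ‖exp (2 * π * I * m * x)‖ = 1 := by
  simp [norm_exp]

lemma exp_two_pi_I_mul_natCast_mul_ofReal_mul_I_add (m : ℕ) (t x : ℝ) :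
    exp (2 * π * I * m * (t * I + x)) = exp (2 * π * I * m * x) * rexp (-(2 * π * m) * t) := by
  rw [ofReal_exp, ← Complex.exp_add]
  congr 1
  push_cast
  linear_combination (2 * (π : ℂ) * m * t) * I_mul_I

lemma ofReal_two_pi_mul_natCast_cpow (m : ℕ) (s : ℂ) :
    ((2 * π * m : ℝ) : ℂ) ^ s = (2 * π) ^ s * (m : ℂ) ^ s := by
  rw [ofReal_mul, mul_cpow_ofReal_nonneg (by positivity) m.cast_nonneg]
  push_cast; rfl

lemma summable_mul_exp_two_pi_I_mul_of_norm_le_rpow {b : ℕ → ℂ} {C A : ℝ}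
    (hb : ∀ m : ℕ, 0 < m → ‖b m‖ ≤ C * (m : ℝ) ^ A) (x : ℝ) {t : ℝ} (ht : 0 < t) :
    Summable fun m : ℕ+ ↦ b m * exp (2 * π * I * m * (t * I + x)) := by
  refine Summable.of_norm ?_
  simp_rw [exp_two_pi_I_mul_natCast_mul_ofReal_mul_I_add, ← mul_assoc, norm_mul, norm_real,
    norm_exp_two_pi_I_mul_natCast_mul_ofReal, mul_one, Real.norm_of_nonneg (exp_pos _).le]
  refine summable_norm_mul_of_norm_le_rpow hb (fun _ ↦ (exp_pos _).le) ?_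
  have := summable_pnat_iff_summable_nat.mpr
    (Real.summable_rpow_mul_exp_neg_nat_mul A (by positivity : 0 < 2 * π * t))
  simpa only [mul_right_comm, neg_mul] using this

lemma summable_norm_div_rpow_of_norm_le_rpow {E : Type*} [SeminormedAddCommGroup E] {b : ℕ → E}
    {C A σ : ℝ} (hb : ∀ m : ℕ, 0 < m → ‖b m‖ ≤ C * (m : ℝ) ^ A) (hσ : A + 1 < σ) :
    Summable fun m : ℕ+ ↦ ‖b m‖ / (m : ℝ) ^ σ := by
  simp_rw [div_eq_mul_inv]
  refine summable_norm_mul_of_norm_le_rpow hb (fun _ ↦ by positivity) ?_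
  have := summable_pnat_iff_summable_nat.mpr
    (Real.summable_nat_rpow.mpr (by linarith : A - σ < -1))
  refine this.congr fun m ↦ ?_
  rw [Real.rpow_sub (by positivity), div_eq_mul_inv]

lemma hasSum_mellin_fourierSeries_vertical {b : ℕ → ℂ} {F : ℝ → ℂ} (x : ℝ) {s : ℂ}
    (hs : 0 < s.re)
    (hF : ∀ t : ℝ, 0 < t → HasSum (fun m : ℕ+ ↦ b m * exp (2 * π * I * m * (t * I + x))) (F t))
    (h_sum : Summable fun m : ℕ+ ↦ ‖b m‖ / (m : ℝ) ^ s.re) :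
    HasSum (fun m : ℕ+ ↦ Gamma s / (2 * π) ^ s * (b m * exp (2 * π * I * m * x) / (m : ℂ) ^ s))
      (mellin F s) := by
  have hmellin := hasSum_mellin (a := fun m : ℕ+ ↦ b m * exp (2 * π * I * m * x))
    (p := fun m ↦ 2 * π * m) (fun m ↦ .inr (by positivity)) hs
    (fun t ht ↦ by
      simpa only [exp_two_pi_I_mul_natCast_mul_ofReal_mul_I_add, ← mul_assoc] using hF t ht) ?_
  · refine hmellin.congr_fun fun m ↦ ?_
    rw [ofReal_two_pi_mul_natCast_cpow]
    field_simp
  · have h2π : (0 : ℝ) ≤ 2 * π := by positivity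
    refine (h_sum.mul_left ((2 * π) ^ (-s.re))).congr fun m ↦ ?_
    rw [norm_mul, norm_exp_two_pi_I_mul_natCast_mul_ofReal, mul_one,
      Real.mul_rpow h2π (m : ℕ).cast_nonneg, Real.rpow_neg h2π]
    field_simp

/-- Twisted Mellin transform of a Fourier series: if `f(z) = ∑_{m≥1} b(m)e^{2πimz}`
with `|b(m)| ≤ C·m^A`, then for rational `q` and `Re(s) > A+1`,
`∫_0^∞ f(iy+q)y^s dy/y = Γ(s)/(2π)^s · ∑_m b(m)e^{2πimq}/m^s`. -/
theorem twisted_mellin_of_fourier_series (b : ℕ → ℂ) (C A : ℝ) (hA : 0 < A)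
    (hb : ∀ m : ℕ, 0 < m → ‖b m‖ ≤ C * (m : ℝ) ^ A)
    (f : ℂ → ℂ)
    (hf : ∀ z : ℂ, 0 < z.im →
      f z = ∑' m : ℕ+, b m * Complex.exp (2 * π * I * m * z))
    (q : ℚ) (s : ℂ) (hs : A + 1 < s.re) :
    (∫ y in Set.Ioi (0 : ℝ), f (y * I + (q : ℂ)) * (y : ℂ) ^ (s - 1)) =
      Complex.Gamma s / (2 * π : ℂ) ^ s *
        ∑' m : ℕ+, b m * Complex.exp (2 * π * I * m * (q : ℂ)) / (m : ℂ) ^ s := by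
  have hF : ∀ t : ℝ, 0 < t → HasSum (fun m : ℕ+ ↦ b m * exp (2 * π * I * m * (t * I + (q : ℝ))))
      (f (t * I + (q : ℝ))) := fun t ht ↦ by
    rw [hf _ (by simpa using ht)]
    exact (summable_mul_exp_two_pi_I_mul_of_norm_le_rpow hb q ht).hasSum
  have hmellin := hasSum_mellin_fourierSeries_vertical q (by linarith) hF
    (summable_norm_div_rpow_of_norm_le_rpow hb hs)
  rw [ofReal_ratCast] at hmellin
  rw [tsum_mul_left.symm.trans hmellin.tsum_eq, mellin]
  exact MeasureTheory.setIntegral_congr_fun measurableSet_Ioi fun t _ ↦ by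
    rw [smul_eq_mul, mul_comm]
end

section
/- Suppose a : ℕ → ℝ satisfies a(tn²) ≤ C|a(t)|·n^ε for all square-free t and all n (with C depending only on ε), and Σ_n |a(n)|/n^{1+ε'} < ∞ for every ε' > 0. Then for every r ≥ 1 and every real τ, |Σ_{m ≡ 0 mod r²} a(m)/m^{1+ε+iτ}| ≤ C'/r² with C' depending only on the sequence and ε, not on r or τ. -/
/-!
Write every `n ≥ 1` as `n = t k²` with `t` square-free. A term of the restricted series has
`m = r² n = t (r k)²`, so the hypothesis on `a` bounds it by
`|C| r⁻² · |a t| / t^{1+ε} · k^{-(2+ε)}`. Since `n ↦ (t, k)` is injective, the restricted series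
is dominated by `|C| r⁻²` times the product of the convergent series `∑ |a t| / t^{1+ε}` and
`∑ k^{-(2+ε)}`.
-/

open Complex Function

section DominatedByProduct

variable {β ι κ : Type*} {b : β → ℝ} {u : ι → ℝ} {v : κ → ℝ} {j : β → ι × κ}

theorem summable_of_le_mul_of_injective (hb : 0 ≤ b) (hu : 0 ≤ u) (hv : 0 ≤ v)
    (hus : Summable u) (hvs : Summable v) (hj : Injective j)
    (hle : ∀ n, b n ≤ u (j n).1 * v (j n).2) : Summable b :=
  .of_nonneg_of_le hb hle ((hus.mul_of_nonneg hvs hu hv).comp_injective hj)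

theorem tsum_le_tsum_mul_tsum_of_le_mul_of_injective (hb : 0 ≤ b) (hu : 0 ≤ u) (hv : 0 ≤ v)
    (hus : Summable u) (hvs : Summable v) (hj : Injective j)
    (hle : ∀ n, b n ≤ u (j n).1 * v (j n).2) : ∑' n, b n ≤ (∑' x, u x) * ∑' y, v y := by
  have huv := hus.mul_of_nonneg hvs hu hv
  rw [hus.tsum_mul_tsum hvs huv]
  exact Summable.tsum_le_tsum_of_inj j hj (fun p _ ↦ mul_nonneg (hu _) (hv _)) hle
    (summable_of_le_mul_of_injective hb hu hv hus hvs hj hle) huv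

end DominatedByProduct

theorem PNat.tsum_ite_dvd_eq_tsum_mul {E : Type*} [AddCommMonoid E] [TopologicalSpace E]
    (d : ℕ+) (f : ℕ+ → E) :
    ∑' m : ℕ+, (if (d : ℕ) ∣ m then f m else 0) = ∑' n, f (d * n) := by
  have hsupp : support (fun m : ℕ+ ↦ if (d : ℕ) ∣ m then f m else 0) ⊆ Set.range (d * ·) := by
    intro m hm
    obtain ⟨k, hk⟩ : (d : ℕ) ∣ m := by_contra fun h ↦ hm (if_neg h)
    have hk0 : 0 < k := Nat.pos_of_mul_pos_left (hk ▸ m.pos)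
    exact ⟨⟨k, hk0⟩, PNat.eq hk.symm⟩
  rw [← (mul_right_injective d).tsum_eq hsupp]
  simp

theorem PNat.exists_injective_squarefree_mul_sq :
    ∃ j : ℕ+ → ℕ+ × ℕ+, Injective j ∧
      ∀ n, Squarefree ((j n).1 : ℕ) ∧ ((j n).1 : ℕ) * (j n).2 ^ 2 = n := by
  have : ∀ n : ℕ+, ∃ p : ℕ+ × ℕ+, Squarefree (p.1 : ℕ) ∧ (p.1 : ℕ) * p.2 ^ 2 = n := by
    intro n
    obtain ⟨t, k, ht, hk, hmul, hsf⟩ := Nat.sq_mul_squarefree_of_pos n.pos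
    exact ⟨(⟨t, ht⟩, ⟨k, hk⟩), hsf, by rw [mul_comm]; exact hmul⟩
  choose j hj using this
  refine ⟨j, fun n₁ n₂ h ↦ PNat.eq ?_, hj⟩
  rw [← (hj n₁).2, ← (hj n₂).2, h]

theorem div_rpow_sq_mul_le {a : ℕ → ℝ} {ε C : ℝ} {t m : ℕ} (ht : 0 < t) (hm : 0 < m)
    (h : |a (t * m ^ 2)| ≤ C * |a t| * (m : ℝ) ^ ε) :
    |a (t * m ^ 2)| / ((t * m ^ 2 : ℕ) : ℝ) ^ (1 + ε) ≤
      C * (|a t| / (t : ℝ) ^ (1 + ε)) * (m : ℝ) ^ (-(2 + ε)) := by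
  have ht' : (0 : ℝ) < t := by exact_mod_cast ht
  have hm' : (0 : ℝ) < m := by exact_mod_cast hm
  have hden : ((t * m ^ 2 : ℕ) : ℝ) ^ (1 + ε) = (t : ℝ) ^ (1 + ε) * (m : ℝ) ^ (2 + 2 * ε) := by
    rw [Nat.cast_mul, Nat.cast_pow, Real.mul_rpow ht'.le (by positivity), ← Real.rpow_natCast,
      ← Real.rpow_mul hm'.le]
    norm_num [mul_add]
  have hexp : (m : ℝ) ^ (-(2 + ε)) = (m : ℝ) ^ ε / (m : ℝ) ^ (2 + 2 * ε) := by
    rw [← Real.rpow_sub hm']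
    ring_nf
  rw [hden, hexp, div_le_iff₀ (by positivity)]
  refine h.trans_eq ?_
  field_simp

theorem rpow_neg_two_add_mul_le {ε r k : ℝ} (hε : 0 ≤ ε) (hr : 1 ≤ r) (hk : 0 ≤ k) :
    (r * k) ^ (-(2 + ε)) ≤ k ^ (-(2 + ε)) / r ^ 2 := by
  have hr0 : 0 ≤ r := by linarith
  have hr2 : r ^ (-(2 + ε)) ≤ (r ^ 2)⁻¹ := by
    rw [← Real.rpow_two, ← Real.rpow_neg hr0]
    exact Real.rpow_le_rpow_of_exponent_le hr (by linarith)
  rw [Real.mul_rpow hr0 hk, div_eq_mul_inv, mul_comm]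
  exact mul_le_mul_of_nonneg_left hr2 (by positivity)

theorem norm_div_cpow_sq_mul_le {a : ℕ → ℝ} {ε C : ℝ} (hε : 0 ≤ ε)
    (ha : ∀ t n : ℕ, Squarefree t → 0 < n → |a (t * n ^ 2)| ≤ C * |a t| * (n : ℝ) ^ ε)
    {r t k : ℕ} (hr : 0 < r) (ht : Squarefree t) (hk : 0 < k) (τ : ℝ) :
    ‖(a (r ^ 2 * (t * k ^ 2)) : ℂ) / ((r ^ 2 * (t * k ^ 2) : ℕ) : ℂ) ^ (1 + ε + τ * I : ℂ)‖ ≤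
      |C| / (r : ℝ) ^ 2 * (|a t| / (t : ℝ) ^ (1 + ε)) * (k : ℝ) ^ (-(2 + ε)) := by
  have ht0 : 0 < t := Nat.pos_of_ne_zero ht.ne_zero
  have hr1 : (1 : ℝ) ≤ r := by exact_mod_cast hr
  rw [show r ^ 2 * (t * k ^ 2) = t * (r * k) ^ 2 by ring, norm_div, norm_real, Real.norm_eq_abs,
    norm_natCast_cpow_of_pos (by positivity)]
  calc _ = |a (t * (r * k) ^ 2)| / ((t * (r * k) ^ 2 : ℕ) : ℝ) ^ (1 + ε) := by simp
    _ ≤ C * (|a t| / (t : ℝ) ^ (1 + ε)) * ((r * k : ℕ) : ℝ) ^ (-(2 + ε)) :=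
        div_rpow_sq_mul_le ht0 (Nat.mul_pos hr hk) (ha _ _ ht (Nat.mul_pos hr hk))
    _ ≤ |C| * (|a t| / (t : ℝ) ^ (1 + ε)) * ((k : ℝ) ^ (-(2 + ε)) / (r : ℝ) ^ 2) := by
        push_cast
        gcongr
        · exact le_abs_self C
        · exact rpow_neg_two_add_mul_le hε hr1 k.cast_nonneg
    _ = _ := by ring

/-- Lemma 2 of the paper (`oneoverrsq`): under the coefficient bound
`|a(tn²)| ≤ C|a(t)|n^ε` for square-free `t`, and absolute convergence of
`∑ |a(n)|/n^{1+ε'}` for every `ε' > 0`, the restricted Dirichlet series satisfies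
`|D_r(1+ε+iτ)| ≤ C'/r²` uniformly in `r` and `τ`. -/
theorem restricted_series_decay (a : ℕ → ℝ) (ε : ℝ) (hε : 0 < ε) (C : ℝ)
    (h1 : ∀ t n : ℕ, Squarefree t → 0 < n → |a (t * n ^ 2)| ≤ C * |a t| * (n : ℝ) ^ ε)
    (h2 : ∀ ε' : ℝ, 0 < ε' → Summable fun n : ℕ+ => |a n| / (n : ℝ) ^ (1 + ε')) :
    ∃ C' : ℝ, ∀ r : ℕ, 0 < r → ∀ τ : ℝ,
      ‖∑' m : ℕ+, (if r ^ 2 ∣ (m : ℕ) then (a m : ℂ) / (m : ℂ) ^ (1 + ε + τ * I : ℂ)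
        else 0)‖ ≤ C' / (r : ℝ) ^ 2 := by
  obtain ⟨j, hj, hjdecomp⟩ := PNat.exists_injective_squarefree_mul_sq
  set u : ℕ+ → ℝ := fun t ↦ |a t| / (t : ℝ) ^ (1 + ε)
  set v : ℕ+ → ℝ := fun k ↦ (k : ℝ) ^ (-(2 + ε))
  have hus : Summable u := h2 ε hε
  have hvs : Summable v :=
    (Real.summable_nat_rpow.mpr (by linarith)).comp_injective PNat.coe_injective
  refine ⟨|C| * ((∑' t, u t) * ∑' k, v k), fun r hr τ ↦ ?_⟩
  let d : ℕ+ := ⟨r ^ 2, by positivity⟩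
  set s : ℂ := 1 + ε + τ * I
  set b : ℕ+ → ℝ := fun n ↦ ‖(a (d * n : ℕ+) : ℂ) / ((d * n : ℕ+) : ℂ) ^ s‖
  have hb : ∀ n, b n ≤ |C| / (r : ℝ) ^ 2 * u (j n).1 * v (j n).2 := fun n ↦ by
    have := norm_div_cpow_sq_mul_le hε.le h1 hr (hjdecomp n).1 (j n).2.pos τ
    rwa [(hjdecomp n).2] at this
  have hu : 0 ≤ fun t ↦ |C| / (r : ℝ) ^ 2 * u t := fun t ↦ by positivity
  have hv : 0 ≤ v := fun k ↦ by positivity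
  calc _ = ‖∑' n, (a (d * n : ℕ+) : ℂ) / ((d * n : ℕ+) : ℂ) ^ s‖ :=
        congrArg norm (PNat.tsum_ite_dvd_eq_tsum_mul d _)
    _ ≤ ∑' n, b n := norm_tsum_le_tsum_norm
        (summable_of_le_mul_of_injective (fun _ ↦ norm_nonneg _) hu hv (hus.mul_left _) hvs hj hb)
    _ ≤ (∑' t, |C| / (r : ℝ) ^ 2 * u t) * ∑' k, v k :=
        tsum_le_tsum_mul_tsum_of_le_mul_of_injective (fun _ ↦ norm_nonneg _) hu hv
          (hus.mul_left _) hvs hj hb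
    _ = _ := by rw [tsum_mul_left]; ring
end

section
/- Let a : ℕ → ℝ with a(n) ≥ 0 for n > T. If Σ_{n > T} a(n)/n^s converges for some real s = σ₀, then the Dirichlet series Σ_{n>T} a(n)/n^s converges for all complex s with Re(s) ≥ σ₀ and defines an analytic function there; hence if the function has a singularity at s = 1 then Σ_{n>T} a(n)/n^σ diverges for every real σ < 1. -/
open Complex

private lemma landau_term_eq (a : ℕ → ℝ) (T : ℕ) (s : ℂ) :
    (fun n : ℕ => if T < n then (a n : ℂ) / (n : ℂ) ^ s else 0) =
      LSeries.term (fun n => if T < n then (a n : ℂ) else 0) s := by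
  funext n
  rcases eq_or_ne n 0 with rfl | hn
  · simp [LSeries.term]
  · rw [LSeries.term_of_ne_zero hn]
    by_cases h : T < n <;> simp [h]

private lemma landau_summable (a : ℕ → ℝ) (T : ℕ)
    (hnn : ∀ n : ℕ, T < n → 0 ≤ a n) (σ : ℝ)
    (hconv : Summable fun n : ℕ => if T < n then a n / (n : ℝ) ^ σ else 0) :
    LSeriesSummable (fun n => if T < n then (a n : ℂ) else 0) (σ : ℂ) := by
  refine Summable.of_norm ?_
  have heq : (fun n : ℕ => ‖LSeries.term (fun n => if T < n then (a n : ℂ) else 0) (σ : ℂ) n‖)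
      = fun n : ℕ => if T < n then a n / (n : ℝ) ^ σ else 0 := by
    funext n
    rw [LSeries.norm_term_eq]
    rcases eq_or_ne n 0 with rfl | hn
    · simp
    · rw [if_neg hn]
      by_cases h : T < n
      · simp only [h, if_true, ofReal_re]
        rw [Complex.norm_real, Real.norm_of_nonneg (hnn n h)]
      · simp [h]
  rw [heq]
  exact hconv

/-- Landau-type theorem: for a Dirichlet series with eventually nonnegative
coefficients converging at a real point `σ₀`, the series converges for all `s` with
`Re(s) ≥ σ₀` and defines an analytic function on `Re(s) > σ₀`; moreover if the series
converges at some real `σ < 1` then the sum function is analytic at `s = 1` (hence a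
singularity at `1` forces divergence at every real `σ < 1`). -/
theorem landau_nonneg_dirichlet (a : ℕ → ℝ) (T : ℕ)
    (hnn : ∀ n : ℕ, T < n → 0 ≤ a n) (σ₀ : ℝ)
    (hconv : Summable fun n : ℕ => if T < n then a n / (n : ℝ) ^ σ₀ else 0) :
    (∀ s : ℂ, σ₀ ≤ s.re →
      Summable fun n : ℕ => if T < n then (a n : ℂ) / (n : ℂ) ^ s else 0) ∧
    DifferentiableOn ℂ
      (fun s : ℂ => ∑' n : ℕ, (if T < n then (a n : ℂ) / (n : ℂ) ^ s else 0))
      {s : ℂ | σ₀ < s.re} ∧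
    (∀ σ : ℝ, σ < 1 →
      (Summable fun n : ℕ => if T < n then a n / (n : ℝ) ^ σ else 0) →
      AnalyticAt ℂ
        (fun s : ℂ => ∑' n : ℕ, (if T < n then (a n : ℂ) / (n : ℂ) ^ s else 0)) 1) := by
  set f : ℕ → ℂ := fun n => if T < n then (a n : ℂ) else 0 with hf
  have hsum : LSeriesSummable f (σ₀ : ℂ) := landau_summable a T hnn σ₀ hconv
  have habs : LSeries.abscissaOfAbsConv f ≤ (σ₀ : EReal) := by
    simpa using hsum.abscissaOfAbsConv_le
  have hfun : (fun s : ℂ => ∑' n : ℕ, (if T < n then (a n : ℂ) / (n : ℂ) ^ s else 0))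
      = LSeries f := by
    funext s
    rw [LSeries, landau_term_eq a T s]
  refine ⟨fun s hs => ?_, ?_, fun σ hσ hσconv => ?_⟩
  · rw [landau_term_eq a T s]
    exact hsum.of_re_le_re (by simpa using hs)
  · rw [hfun]
    refine (LSeries_differentiableOn f).mono fun s hs => ?_
    exact lt_of_le_of_lt habs (by exact_mod_cast hs)
  · rw [hfun]
    have habs' : LSeries.abscissaOfAbsConv f ≤ (σ : EReal) := by
      simpa using (landau_summable a T hnn σ hσconv).abscissaOfAbsConv_le
    refine LSeries_analyticOnNhd f 1 ?_
    refine lt_of_le_of_lt habs' ?_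
    simp only [one_re]
    exact_mod_cast hσ
end
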